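/- arXiv:math/0411350 — 3 statements merged into one kernel-verified Lean document; each statement's English description precedes it below -/
import Mathlib

section
/- Let A be a central hyperplane arrangement of rank d with lattice of flats L(A) and Möbius function μ. Then the polynomial identity q^{2d} · h^{br}_A(q^{−1}) = Σ_F h^{br}_{A_F}(q) (q−1)^{crk F} Σ_{G ⊇ F} χ_{A^G}(q) r(A^F_G) holds, where all quantities are defined via the Möbius function: χ_A(q) = Σ_F μ(F) q^{crk F}, r(A) = Σ_F (−1)^{rk F} μ(F), and h^{br}_A(q) = (−1)^{rk A} Σ_F μ(F) q^{rk F} (q−1)^{crk F}, with localization A_F and restriction A^F having lattices of flats identified with the intervals [∅, F] and [F, top] in L(A) respectively. -/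
/-!
Expanding `χ_{A^G}(q) r(A^F_G)` and summing over `G ∈ [J, I]` first, the recursion of `μ`
leaves only `I = J`, so `Σ_{G ⊇ F} χ_{A^G}(q) r(A^F_G) = Σ_{J ⊇ F} (-1)^{rk J - rk F} μ(F, J) q^{crk J}`.
Substituting this together with the definition of `h^{br}_{A_F}` and summing over `F ∈ [H, J]`
first, the recursion leaves only `H = J`, so the right-hand side is
`Σ_H (-1)^{rk H} μ(H) q^d (q - 1)^{crk H}`, which is `q^{2d} h^{br}_A(q⁻¹)` term by term.
-/

open Finset

section MobiusSums

variable {L R : Type*} [Fintype L] [Preorder L] [DecidableLE L] [DecidableEq L] [CommRing R]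
  {μ : L → L → ℤ}

theorem sum_mobius_eq_ite
    (hrec : ∀ A C : L, A ≤ C →
      (∑ B : L, if A ≤ B ∧ B ≤ C then μ B C else 0) = if A = C then 1 else 0)
    (A C : L) :
    (∑ B : L, if A ≤ B ∧ B ≤ C then (μ B C : R) else 0) = if A = C then 1 else 0 := by
  by_cases hAC : A ≤ C
  · have := congrArg (Int.cast : ℤ → R) (hrec A C hAC)
    simpa only [Int.cast_sum, apply_ite (Int.cast : ℤ → R), Int.cast_zero, Int.cast_one]
      using this
  · rw [if_neg (fun h => hAC h.le)]
    exact sum_eq_zero fun B _ => if_neg fun h => hAC (h.1.trans h.2)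

variable (hrec : ∀ A C : L, A ≤ C →
  (∑ B : L, if A ≤ B ∧ B ≤ C then μ B C else 0) = if A = C then 1 else 0)
include hrec

theorem sum_sum_mobius_mul_right (A : L) (g : L → R) :
    ∑ C : L, (∑ B : L, if A ≤ B ∧ B ≤ C then (μ B C : R) else 0) * g C = g A := by
  simp only [sum_mobius_eq_ite hrec, ite_mul, one_mul, zero_mul, sum_ite_eq, mem_univ, if_true]

theorem sum_sum_mobius_mul_left (C : L) (g : L → R) :
    ∑ A : L, (∑ B : L, if A ≤ B ∧ B ≤ C then (μ B C : R) else 0) * g A = g C := by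
  simp only [sum_mobius_eq_ite hrec, ite_mul, one_mul, zero_mul, sum_ite_eq', mem_univ, if_true]

theorem sum_mul_sum_mobius_interval (F : L) (φ ψ : L → R) :
    (∑ G : L, if F ≤ G then
        (∑ I : L, if G ≤ I then (μ G I : R) * φ I else 0) *
          ∑ J : L, if F ≤ J ∧ J ≤ G then ψ J else 0
      else 0) =
      ∑ J : L, if F ≤ J then ψ J * φ J else 0 := by
  calc _ = ∑ J : L, if F ≤ J then
          ψ J * ∑ I : L, (∑ G : L, if J ≤ G ∧ G ≤ I then (μ G I : R) else 0) * φ I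
        else 0 := by
        simp only [sum_mul, mul_sum, ite_mul, mul_ite, zero_mul, mul_zero, ite_sum_zero,
          ← ite_and]
        rw [sum_comm]
        refine sum_congr rfl fun J _ => ?_
        rw [sum_comm]
        refine sum_congr rfl fun I _ => sum_congr rfl fun G _ => ?_
        have hcond : F ≤ G ∧ (F ≤ J ∧ J ≤ G) ∧ G ≤ I ↔ F ≤ J ∧ J ≤ G ∧ G ≤ I :=
          ⟨fun h => ⟨h.2.1.1, h.2.1.2, h.2.2⟩, fun h => ⟨h.1.trans h.2.1, ⟨h.1, h.2.1⟩, h.2.2⟩⟩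
        exact if_congr hcond (by ring) rfl
    _ = _ := by simp only [sum_sum_mobius_mul_right hrec]

theorem sum_mul_sum_mobius_upper (a b : L → R) :
    ∑ F : L, (∑ H : L, if H ≤ F then a H else 0) *
        (∑ J : L, if F ≤ J then (μ F J : R) * b J else 0) =
      ∑ J : L, a J * b J := by
  calc _ = ∑ J : L,
          (∑ H : L, (∑ F : L, if H ≤ F ∧ F ≤ J then (μ F J : R) else 0) * a H) * b J := by
        simp only [sum_mul, mul_sum, ite_mul, mul_ite, zero_mul, mul_zero, ite_sum_zero,
          ← ite_and]
        rw [sum_comm]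
        refine sum_congr rfl fun J _ => ?_
        rw [sum_comm]
        exact sum_congr rfl fun H _ => sum_congr rfl fun F _ => if_congr and_comm (by ring) rfl
    _ = _ := by simp only [sum_sum_mobius_mul_left hrec]

end MobiusSums

section RankShifts

variable {L R : Type*} [Fintype L] [Preorder L] [DecidableLE L] [CommRing R]
  {rk : L → ℕ} (hmono : Monotone rk)
include hmono

theorem sum_le_mul_pow_sub_mul_pow {d : ℕ} {F : L} (hF : rk F ≤ d) (c : L → R) (x : R) :
    (∑ H : L, if H ≤ F then c H * x ^ (rk F - rk H) else 0) * x ^ (d - rk F) =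
      ∑ H : L, if H ≤ F then c H * x ^ (d - rk H) else 0 := by
  rw [sum_mul]
  refine sum_congr rfl fun H _ => ?_
  split_ifs with hHF
  · have hexp : rk F - rk H + (d - rk F) = d - rk H := by
      have := hmono hHF
      omega
    rw [mul_assoc, ← pow_add, hexp]
  · exact zero_mul _

theorem pow_mul_sum_le_pow_sub_mul_mul (F : L) (c e : L → R) (y : R) :
    y ^ rk F * (∑ J : L, if F ≤ J then y ^ (rk J - rk F) * c J * e J else 0) =
      ∑ J : L, if F ≤ J then c J * (y ^ rk J * e J) else 0 := by
  rw [mul_sum]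
  refine sum_congr rfl fun J _ => ?_
  split_ifs with hFJ
  · rw [← pow_mul_pow_sub y (hmono hFJ)]
    ring
  · exact mul_zero _

end RankShifts

theorem pow_two_mul_neg_one_pow_mul_inv_sub_one_pow {K : Type*} [Field K] {q : K} (hq : q ≠ 0)
    {k d : ℕ} (hk : k ≤ d) :
    q ^ (2 * d) * ((-1) ^ d * (q⁻¹ ^ k * (q⁻¹ - 1) ^ (d - k))) =
      q ^ k * (q - 1) ^ (d - k) * ((-1) ^ k * q ^ (d - k)) := by
  obtain ⟨m, rfl⟩ := Nat.exists_eq_add_of_le hk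
  have hq_inv : q⁻¹ * q = 1 := inv_mul_cancel₀ hq
  have hq_sub : (q⁻¹ - 1) * (-1) * q = q - 1 := by field_simp; ring
  rw [Nat.add_sub_cancel_left]
  calc _ = (q⁻¹ ^ k * q ^ k) * ((q⁻¹ - 1) ^ m * (-1) ^ m * q ^ m) *
          (q ^ k * ((-1) ^ k * q ^ m)) := by ring
    _ = _ := by rw [← mul_pow, ← mul_pow, ← mul_pow, hq_inv, hq_sub]; ring

open Classical in
theorem stmt_6_general (L : Type*) [Fintype L] [Lattice L] [BoundedOrder L]
    (d : ℕ) (rk : L → ℕ) (hmono : Monotone rk) (htop : rk ⊤ = d)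
    (μ : L → L → ℤ)
    (hrec : ∀ A C : L, A ≤ C →
      (∑ B : L, if A ≤ B ∧ B ≤ C then μ B C else 0) = if A = C then 1 else 0)
    (q : ℚ) (hq : q ≠ 0) :
    q ^ (2 * d) *
        ((-1 : ℚ) ^ d * ∑ F : L, (μ ⊥ F : ℚ) * q⁻¹ ^ (rk F) * (q⁻¹ - 1) ^ (d - rk F)) =
      ∑ F : L,
        ((-1 : ℚ) ^ (rk F) *
            ∑ H : L, if H ≤ F then
              (μ ⊥ H : ℚ) * q ^ (rk H) * (q - 1) ^ (rk F - rk H) else 0) *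
          (q - 1) ^ (d - rk F) *
          ∑ G : L, if F ≤ G then
              (∑ I : L, if G ≤ I then (μ G I : ℚ) * q ^ (d - rk I) else 0) *
              (∑ J : L, if F ≤ J ∧ J ≤ G then
                (-1 : ℚ) ^ (rk J - rk F) * (μ F J : ℚ) else 0)
            else 0 := by
  have hrk : ∀ F, rk F ≤ d := fun F => htop ▸ hmono le_top
  calc _ = ∑ F : L,
          μ ⊥ F * q ^ rk F * (q - 1) ^ (d - rk F) * ((-1) ^ rk F * q ^ (d - rk F)) := by
        rw [mul_sum, mul_sum]
        refine sum_congr rfl fun F _ => ?_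
        linear_combination (μ ⊥ F : ℚ) * pow_two_mul_neg_one_pow_mul_inv_sub_one_pow hq (hrk F)
    _ = ∑ F : L,
          (∑ H : L, if H ≤ F then μ ⊥ H * q ^ rk H * (q - 1) ^ (d - rk H) else 0) *
            (∑ J : L, if F ≤ J then (μ F J : ℚ) * ((-1) ^ rk J * q ^ (d - rk J)) else 0) :=
        (sum_mul_sum_mobius_upper hrec _ _).symm
    _ = _ := by
        refine sum_congr rfl fun F _ => ?_
        rw [sum_mul_sum_mobius_interval hrec,
          ← sum_le_mul_pow_sub_mul_pow hmono (hrk F) (fun H => μ ⊥ H * q ^ rk H),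
          ← pow_mul_sum_le_pow_sub_mul_mul hmono F (fun J => (μ F J : ℚ))]
        ring

open Classical in
theorem stmt_6 (L : Type*) [Fintype L] [Lattice L] [BoundedOrder L]
    (d : ℕ) (rk : L → ℕ) (hmono : Monotone rk) (hbot : rk ⊥ = 0) (htop : rk ⊤ = d)
    (μ : L → L → ℤ)
    (hzero : ∀ A B : L, ¬ A ≤ B → μ A B = 0)
    (hrec : ∀ A C : L, A ≤ C →
      (∑ B : L, if A ≤ B ∧ B ≤ C then μ B C else 0) = if A = C then 1 else 0)
    (q : ℚ) (hq : q ≠ 0) :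
    q ^ (2 * d) *
        ((-1 : ℚ) ^ d * ∑ F : L, (μ ⊥ F : ℚ) * q⁻¹ ^ (rk F) * (q⁻¹ - 1) ^ (d - rk F)) =
      ∑ F : L,
        ((-1 : ℚ) ^ (rk F) *
            ∑ H : L, if H ≤ F then
              (μ ⊥ H : ℚ) * q ^ (rk H) * (q - 1) ^ (rk F - rk H) else 0) *
          (q - 1) ^ (d - rk F) *
          ∑ G : L, if F ≤ G then
              (∑ I : L, if G ≤ I then (μ G I : ℚ) * q ^ (d - rk I) else 0) *
              (∑ J : L, if F ≤ J ∧ J ≤ G then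
                (-1 : ℚ) ^ (rk J - rk F) * (μ F J : ℚ) else 0)
            else 0 :=
  stmt_6_general L d rk hmono htop μ hrec q hq
end

section
/- (Kook–Reiner–Stanton convolution formula) For any matroid M on ground set E, T_M(x,y) = Σ_{F ∈ L(M)} T_{M|F}(0, y) · T_{M/F}(x, 0), where the sum is over flats F, M|F is the restriction of M to F, and M/F is the contraction of M by F. -/
/-!
Expanding the product, reindex the contraction sum by `D = S ∪ F`. If `F` is not a flat, some
`e ∉ F` is a loop of `M/F`, and toggling `e` pairs the subsets of `Fᶜ` with opposite signs, so
the sum may run over all `F`. For `B ⊆ F ⊆ D` the signs combine to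
`(-1)^(r D - r B) (-1)^(|D| - |F|)`, and Möbius inversion on the Boolean interval `[B, D]` kills
every pair `B ≠ D`, leaving the corank–nullity expansion of `T_M(x, y)`.
-/

open Finset

section RankFunction

variable {α : Type*} [DecidableEq α] {r : Finset α → ℕ}

theorem rank_union_le_add_card (hr : ∀ S e, r (insert e S) ≤ r S + 1) (S U : Finset α) :
    r (S ∪ U) ≤ r S + U.card := by
  induction U using Finset.induction_on with
  | empty => simp
  | insert a U ha ih =>
    rw [union_insert, card_insert_of_notMem ha]
    linarith [hr (S ∪ U) a]

theorem rank_insert_eq_of_subset (hmono : Monotone r)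
    (hsub : ∀ S T, r (S ∪ T) + r (S ∩ T) ≤ r S + r T) {A S : Finset α} {e : α}
    (hAS : A ⊆ S) (he : r (insert e A) = r A) : r (insert e S) = r S := by
  have hsub' := hsub S (insert e A)
  rw [union_insert, union_eq_left.2 hAS, he] at hsub'
  have hA : r A ≤ r (S ∩ insert e A) := hmono (subset_inter hAS (subset_insert e A))
  have hS : r S ≤ r (insert e S) := hmono (subset_insert e S)
  omega

end RankFunction

section BooleanLattice

variable {α M R : Type*} [DecidableEq α] [AddCommMonoid M] [CommRing R]

theorem sum_powerset_eq_zero_of_insert_eq_neg {s : Finset α} {e : α} (he : e ∈ s)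
    {g : Finset α → R} (hg : ∀ t ⊆ s.erase e, g (insert e t) = -g t) :
    ∑ t ∈ s.powerset, g t = 0 := by
  rw [← insert_erase he, sum_powerset_insert (notMem_erase e s),
    sum_congr rfl fun t ht => hg t (mem_powerset.1 ht), sum_neg_distrib, add_neg_cancel]

theorem sum_Icc_neg_one_pow_card_sub (B D : Finset α) :
    ∑ F ∈ Icc B D, (-1 : R) ^ (D.card - F.card) = if B = D then 1 else 0 := by
  by_cases hBD : B ⊆ D
  · have hcompl : ∑ F ∈ Icc B D, (-1 : R) ^ (D.card - F.card) =
        ∑ G ∈ (D \ B).powerset, (-1 : R) ^ G.card := by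
      refine sum_nbij' (D \ ·) (D \ ·) ?_ ?_ ?_ ?_ ?_
      · intro F hF
        exact mem_powerset.2 (sdiff_subset_sdiff Subset.rfl (mem_Icc.1 hF).1)
      · intro G hG
        have hGD := mem_powerset.1 hG
        exact mem_Icc.2 ⟨subset_sdiff.2 ⟨hBD, disjoint_of_subset_right hGD disjoint_sdiff⟩,
          sdiff_subset⟩
      · intro F hF; exact Finset.sdiff_sdiff_eq_self (mem_Icc.1 hF).2
      · intro G hG; exact Finset.sdiff_sdiff_eq_self ((mem_powerset.1 hG).trans sdiff_subset)
      · intro F hF; rw [card_sdiff_of_subset (mem_Icc.1 hF).2]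
    have hint := congrArg (Int.cast : ℤ → R) (sum_powerset_neg_one_pow_card (x := D \ B))
    push_cast at hint
    rw [hcompl, hint]
    exact if_congr ⟨fun h => subset_antisymm hBD (sdiff_eq_empty_iff_subset.1 h),
      fun h => sdiff_eq_empty_iff_subset.2 h.ge⟩ rfl rfl
  · rw [Icc_eq_empty hBD, sum_empty, if_neg (fun h => hBD h.le)]

theorem sum_powerset_compl_eq_sum_Icc [Fintype α] (F : Finset α) (g : Finset α → ℕ → M) :
    ∑ S ∈ Fᶜ.powerset, g (S ∪ F) S.card = ∑ D ∈ Icc F univ, g D (D.card - F.card) := by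
  refine sum_nbij' (· ∪ F) (· \ F) ?_ ?_ ?_ ?_ ?_
  · intro S _; simp
  · intro D _; simp [subset_compl_iff_disjoint_right, disjoint_sdiff_self_left]
  · intro S hS
    exact union_sdiff_cancel_right (subset_compl_iff_disjoint_right.1 (mem_powerset.1 hS))
  · intro D hD; exact sdiff_union_of_subset (mem_Icc.1 hD).1
  · intro S hS
    rw [card_union_of_disjoint (subset_compl_iff_disjoint_right.1 (mem_powerset.1 hS)),
      Nat.add_sub_cancel]

theorem sum_sum_powerset_sum_Icc_univ [Fintype α] (φ : Finset α → Finset α → Finset α → M) :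
    ∑ F, ∑ B ∈ F.powerset, ∑ D ∈ Icc F univ, φ B F D = ∑ B, ∑ D, ∑ F ∈ Icc B D, φ B F D := by
  rw [sum_comm' (t' := univ) (s' := fun B => Icc B univ) (by intro F B; simp)]
  exact sum_congr rfl fun B _ => sum_comm' (by intro F D; simp)

end BooleanLattice

section Convolution

variable {α R : Type*} [Fintype α] [DecidableEq α] [CommRing R] {r : Finset α → ℕ}

theorem sum_contraction_eq_zero_of_loop (hmono : Monotone r)
    (hcard : ∀ S U, r (S ∪ U) ≤ r S + U.card)
    (hsub : ∀ S T, r (S ∪ T) + r (S ∩ T) ≤ r S + r T) (x : R) {F : Finset α} {e : α}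
    (he : e ∉ F) (hloop : r (insert e F) = r F) :
    ∑ S ∈ Fᶜ.powerset, (x - 1) ^ ((r univ - r F) - (r (S ∪ F) - r F)) *
      (-1) ^ (S.card - (r (S ∪ F) - r F)) = 0 := by
  refine sum_powerset_eq_zero_of_insert_eq_neg (mem_compl.2 he) fun S hS => ?_
  have heS : e ∉ S := fun h => notMem_erase e Fᶜ (hS h)
  have hrank : r (insert e S ∪ F) = r (S ∪ F) := by
    rw [insert_union]
    exact rank_insert_eq_of_subset hmono hsub subset_union_right hloop
  have hnull : r (S ∪ F) - r F ≤ S.card := by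
    have := hcard F S
    rw [union_comm] at this
    omega
  rw [hrank, card_insert_of_notMem heS, Nat.sub_add_comm hnull, pow_succ]
  ring

theorem convolution_term_eq (hmono : Monotone r) (hcard : ∀ S U, r (S ∪ U) ≤ r S + U.card)
    (x y : R) {B F D : Finset α} (hBF : B ⊆ F) (hFD : F ⊆ D) :
    (-1) ^ (r F - r B) * (y - 1) ^ (B.card - r B) *
        ((x - 1) ^ ((r univ - r F) - (r D - r F)) * (-1) ^ ((D.card - F.card) - (r D - r F))) =
      (-1) ^ (r D - r B) * (x - 1) ^ (r univ - r D) * (y - 1) ^ (B.card - r B) *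
        (-1) ^ (D.card - F.card) := by
  have hBF' : r B ≤ r F := hmono hBF
  have hFD' : r F ≤ r D := hmono hFD
  have hDE : r D ≤ r univ := hmono (subset_univ D)
  have hnull : r D ≤ r F + (D.card - F.card) := by
    have := hcard F (D \ F)
    rwa [union_sdiff_of_subset hFD, card_sdiff_of_subset hFD] at this
  have hsign : (-1 : R) ^ (r F - r B) * (-1) ^ ((D.card - F.card) - (r D - r F)) =
      (-1) ^ (r D - r B) * (-1) ^ (D.card - F.card) := by
    rw [← pow_add, ← pow_add, neg_one_pow_eq_pow_mod_two,
      neg_one_pow_eq_pow_mod_two (_ + _)]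
    congr 1
    omega
  rw [show (r univ - r F) - (r D - r F) = r univ - r D by omega]
  linear_combination (x - 1) ^ (r univ - r D) * (y - 1) ^ (B.card - r B) * hsign

end Convolution

open Classical in
theorem stmt_12_general (n : ℕ) (r : Finset (Fin n) → ℕ)
    (h1 : ∀ (S : Finset (Fin n)) (e : Fin n),
      r S ≤ r (insert e S) ∧ r (insert e S) ≤ r S + 1)
    (h2 : ∀ S T : Finset (Fin n), r (S ∪ T) + r (S ∩ T) ≤ r S + r T)
    (IsFlat : Finset (Fin n) → Prop)
    (hFlat : ∀ F, IsFlat F ↔ ∀ e ∉ F, r F < r (insert e F))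
    (x y : ℚ) :
    ∑ S : Finset (Fin n),
        (x - 1) ^ (r Finset.univ - r S) * (y - 1) ^ (S.card - r S) =
      ∑ F : Finset (Fin n), if IsFlat F then
          (∑ S ∈ F.powerset,
            ((0 : ℚ) - 1) ^ (r F - r S) * (y - 1) ^ (S.card - r S)) *
          (∑ S ∈ Fᶜ.powerset,
            (x - 1) ^ ((r Finset.univ - r F) - (r (S ∪ F) - r F)) *
            ((0 : ℚ) - 1) ^ (S.card - (r (S ∪ F) - r F)))
        else 0 := by
  have hmono : Monotone r := monotone_iff_forall_le_insert.2 fun S e _ => (h1 S e).1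
  have hcard := rank_union_le_add_card fun S e => (h1 S e).2
  simp only [zero_sub]
  symm
  calc _ = ∑ F, (∑ B ∈ F.powerset, (-1) ^ (r F - r B) * (y - 1) ^ (B.card - r B)) *
        ∑ D ∈ Icc F univ, (x - 1) ^ ((r univ - r F) - (r D - r F)) *
          (-1) ^ ((D.card - F.card) - (r D - r F)) := by
        refine sum_congr rfl fun F _ => ?_
        rw [← sum_powerset_compl_eq_sum_Icc F
          fun D k => (x - 1) ^ ((r univ - r F) - (r D - r F)) * (-1) ^ (k - (r D - r F))]
        split_ifs with hF
        · rfl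
        · obtain ⟨e, he, hloop⟩ : ∃ e ∉ F, r (insert e F) ≤ r F := by
            simpa [hFlat] using hF
          rw [sum_contraction_eq_zero_of_loop hmono hcard h2 x he
            (hloop.antisymm (hmono (subset_insert e F))), mul_zero]
    _ = ∑ B, ∑ D, ∑ F ∈ Icc B D, (-1) ^ (r D - r B) * (x - 1) ^ (r univ - r D) *
          (y - 1) ^ (B.card - r B) * (-1) ^ (D.card - F.card) := by
        simp_rw [sum_mul_sum]
        rw [sum_sum_powerset_sum_Icc_univ]
        refine sum_congr rfl fun B _ => sum_congr rfl fun D _ => sum_congr rfl fun F hF => ?_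
        exact convolution_term_eq hmono hcard x y (mem_Icc.1 hF).1 (mem_Icc.1 hF).2
    _ = _ := by
        simp_rw [← mul_sum, sum_Icc_neg_one_pow_card_sub, mul_ite, mul_one, mul_zero,
          sum_ite_eq, mem_univ, if_true, Nat.sub_self, pow_zero, one_mul]

open Classical in
theorem stmt_12 (n : ℕ) (r : Finset (Fin n) → ℕ)
    (h0 : r ∅ = 0)
    (h1 : ∀ (S : Finset (Fin n)) (e : Fin n),
      r S ≤ r (insert e S) ∧ r (insert e S) ≤ r S + 1)
    (h2 : ∀ S T : Finset (Fin n), r (S ∪ T) + r (S ∩ T) ≤ r S + r T)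
    (IsFlat : Finset (Fin n) → Prop)
    (hFlat : ∀ F, IsFlat F ↔ ∀ e ∉ F, r F < r (insert e F))
    (x y : ℚ) :
    ∑ S : Finset (Fin n),
        (x - 1) ^ (r Finset.univ - r S) * (y - 1) ^ (S.card - r S) =
      ∑ F : Finset (Fin n), if IsFlat F then
          (∑ S ∈ F.powerset,
            ((0 : ℚ) - 1) ^ (r F - r S) * (y - 1) ^ (S.card - r S)) *
          (∑ S ∈ Fᶜ.powerset,
            (x - 1) ^ ((r Finset.univ - r F) - (r (S ∪ F) - r F)) *
            ((0 : ℚ) - 1) ^ (S.card - (r (S ∪ F) - r F)))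
        else 0 :=
  stmt_12_general n r h1 h2 IsFlat hFlat x y
end

section
/- For a matroid M of rank d, the polynomial identity h_M(q) = Σ_{F ∈ L(M)} h^{br}_{M/F}(q) · h_{rk F}(M|F) · q^{rk F} holds, where h_M is the h-polynomial of the independence complex, h^{br} is the h-polynomial of the broken circuit complex (equivalently q^{rk} T(q^{−1},0)), and h_{rk F}(M|F) = T_{M|F}(0,1) is the top h-number of the independence complex of M|F. -/
namespace Stmt13Aux

set_option linter.unusedSectionVars false
set_option linter.unusedVariables false



open Finset

attribute [local instance] Classical.propDecidable

variable {n : ℕ}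

/-- flat predicate for a rank function -/
def Flt (r : Finset (Fin n) → ℕ) (F : Finset (Fin n)) : Prop :=
  ∀ e ∉ F, r F < r (insert e F)

/-- closure operator -/
def cl (r : Finset (Fin n) → ℕ) (S : Finset (Fin n)) : Finset (Fin n) :=
  Finset.univ.filter (fun e => r (insert e S) = r S)

variable {r : Finset (Fin n) → ℕ}

lemma mem_cl {S : Finset (Fin n)} {e : Fin n} :
    e ∈ cl r S ↔ r (insert e S) = r S := by simp [cl]

lemma subset_cl (S : Finset (Fin n)) : S ⊆ cl r S := by
  intro e he; rw [mem_cl, Finset.insert_eq_self.mpr he]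

section Rank

variable (h1 : ∀ (S : Finset (Fin n)) (e : Fin n),
      r S ≤ r (insert e S) ∧ r (insert e S) ≤ r S + 1)
variable (h2 : ∀ S T : Finset (Fin n), r (S ∪ T) + r (S ∩ T) ≤ r S + r T)

include h1

lemma r_le_union (S U : Finset (Fin n)) : r S ≤ r (S ∪ U) := by
  induction U using Finset.induction_on with
  | empty => simp
  | @insert a U ha ih =>
    rw [Finset.union_insert]
    exact le_trans ih (h1 _ a).1

lemma r_mono {S T : Finset (Fin n)} (h : S ⊆ T) : r S ≤ r T := by
  have := r_le_union h1 S T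
  rwa [Finset.union_eq_right.mpr h] at this

lemma r_le_card (h0 : r ∅ = 0) (S : Finset (Fin n)) : r S ≤ S.card := by
  induction S using Finset.induction_on with
  | empty => simp [h0]
  | @insert a S ha ih =>
    calc r (insert a S) ≤ r S + 1 := (h1 S a).2
    _ ≤ S.card + 1 := by omega
    _ = (insert a S).card := (Finset.card_insert_of_notMem ha).symm

lemma r_union_le_add (S U : Finset (Fin n)) : r (S ∪ U) ≤ r S + U.card := by
  induction U using Finset.induction_on with
  | empty => simp
  | @insert a U ha ih =>
    rw [Finset.union_insert]
    calc r (insert a (S ∪ U)) ≤ r (S ∪ U) + 1 := (h1 _ a).2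
    _ ≤ r S + U.card + 1 := by omega
    _ = r S + (insert a U).card := by rw [Finset.card_insert_of_notMem ha]; omega

include h2

lemma r_spanning (S U : Finset (Fin n)) (hU : ∀ e ∈ U, r (insert e S) = r S) :
    r (S ∪ U) = r S := by
  induction U using Finset.induction_on with
  | empty => simp
  | @insert a U ha ih =>
    have hX : r (S ∪ U) = r S := ih (fun e he => hU e (Finset.mem_insert_of_mem he))
    have ha' : r (insert a S) = r S := hU a (Finset.mem_insert_self a U)
    rw [Finset.union_insert]
    have hsub := h2 (insert a S) (S ∪ U)
    have hun : insert a S ∪ (S ∪ U) = insert a (S ∪ U) := by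
      rw [Finset.insert_union, Finset.union_left_idem]
    have hin : r S ≤ r (insert a S ∩ (S ∪ U)) := by
      apply r_mono h1
      intro e he
      exact Finset.mem_inter.mpr ⟨Finset.mem_insert_of_mem he, Finset.mem_union_left _ he⟩
    rw [hun, ha', hX] at hsub
    have hge : r (S ∪ U) ≤ r (insert a (S ∪ U)) := (h1 _ a).1
    omega

lemma r_cl (S : Finset (Fin n)) : r (cl r S) = r S := by
  have h := r_spanning h1 h2 S (cl r S) (fun e he => mem_cl.mp he)
  rwa [Finset.union_eq_right.mpr (subset_cl S)] at h

lemma flt_cl (S : Finset (Fin n)) : Flt r (cl r S) := by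
  intro e he
  have hne : r (insert e S) ≠ r S := fun h => he (mem_cl.mpr h)
  have hb := h1 S e
  have heq : r (insert e S) = r S + 1 := by omega
  have hmono : r (insert e S) ≤ r (insert e (cl r S)) :=
    r_mono h1 (Finset.insert_subset_insert e (subset_cl S))
  rw [r_cl h1 h2]
  omega

lemma cl_subset_flat {H X : Finset (Fin n)} (hH : Flt r H) (hX : X ⊆ H) :
    cl r X ⊆ H := by
  intro e he
  rw [mem_cl] at he
  by_contra he'
  have hflat := hH e he'
  have hsub := h2 (insert e X) H
  have hun : insert e X ∪ H = insert e H := by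
    rw [Finset.insert_union, Finset.union_eq_right.mpr hX]
  have hin : r X ≤ r (insert e X ∩ H) := by
    apply r_mono h1
    intro x hx
    exact Finset.mem_inter.mpr ⟨Finset.mem_insert_of_mem hx, hX hx⟩
  rw [hun, he] at hsub
  omega

end Rank



section Conv

variable {r : Finset (Fin n) → ℕ}

/-- alternating sum over a powerset -/
lemma altsum (s : Finset (Fin n)) :
    ∑ B ∈ s.powerset, (-1 : ℚ) ^ B.card = if s = ∅ then 1 else 0 := by
  have := @Finset.sum_powerset_neg_one_pow_card (Fin n) _ s
  have hc : ((∑ m ∈ s.powerset, (-1 : ℤ) ^ m.card : ℤ) : ℚ)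
      = ∑ B ∈ s.powerset, (-1 : ℚ) ^ B.card := by push_cast; rfl
  rw [← hc, this]
  split <;> norm_num

variable (r)

noncomputable def aa (F H : Finset (Fin n)) : ℚ :=
  ∑ B ∈ Fᶜ.powerset with cl r (B ∪ F) = H, (-1 : ℚ) ^ B.card

noncomputable def btw (F' H : Finset (Fin n)) : Finset (Finset (Fin n)) :=
  Finset.univ.filter (fun F => Flt r F ∧ F' ⊆ F ∧ F ⊆ H)

noncomputable def ab (F' : Finset (Fin n)) : Finset (Finset (Fin n)) :=
  Finset.univ.filter (fun F => Flt r F ∧ F' ⊆ F)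

noncomputable def AA (F' H : Finset (Fin n)) : ℚ :=
  ∑ F ∈ btw r F' H, aa r F H

variable {r}
variable (h1 : ∀ (S : Finset (Fin n)) (e : Fin n),
      r S ≤ r (insert e S) ∧ r (insert e S) ≤ r S + 1)
variable (h2 : ∀ S T : Finset (Fin n), r (S ∪ T) + r (S ∩ T) ≤ r S + r T)

include h1 h2

lemma RS {F H : Finset (Fin n)} (hH : Flt r H) (hFH : F ⊆ H) :
    ∑ K ∈ btw r F H, aa r F K = if F = H then 1 else 0 := by
  have hset : ∀ K ∈ btw r F H,
      aa r F K = ∑ B ∈ (H \ F).powerset with cl r (B ∪ F) = K, (-1 : ℚ) ^ B.card := by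
    intro K hK
    simp only [btw, mem_filter, mem_univ, true_and] at hK
    obtain ⟨hKf, hFK, hKH⟩ := hK
    unfold aa
    congr 1
    ext B
    simp only [mem_filter, mem_powerset]
    constructor
    · rintro ⟨hBc, hclB⟩
      refine ⟨?_, hclB⟩
      intro e he
      have heK : e ∈ K := hclB ▸ (subset_cl (B ∪ F) (Finset.mem_union_left _ he))
      exact Finset.mem_sdiff.mpr ⟨hKH heK, by simpa using (hBc he)⟩
    · rintro ⟨hBs, hclB⟩
      refine ⟨?_, hclB⟩
      intro e he
      simpa using (Finset.mem_sdiff.mp (hBs he)).2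
  rw [Finset.sum_congr rfl hset]
  have hmaps : ∀ B ∈ (H \ F).powerset, cl r (B ∪ F) ∈ btw r F H := by
    intro B hB
    rw [mem_powerset] at hB
    simp only [btw, mem_filter, mem_univ, true_and]
    refine ⟨flt_cl h1 h2 _, le_trans Finset.subset_union_right (subset_cl _), ?_⟩
    apply cl_subset_flat h1 h2 hH
    apply Finset.union_subset (le_trans hB (Finset.sdiff_subset)) hFH
  rw [Finset.sum_fiberwise_of_maps_to hmaps, altsum]
  congr 1
  simp only [eq_iff_iff, Finset.sdiff_eq_empty_iff_subset]
  exact ⟨fun h => le_antisymm hFH h, fun h => h ▸ le_refl _⟩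

lemma DC {F' H : Finset (Fin n)} (hF' : Flt r F') (hH : Flt r H) (hFH : F' ⊆ H) :
    ∑ K ∈ btw r F' H, AA r F' K = 1 := by
  unfold AA
  rw [Finset.sum_comm'
    (s := btw r F' H) (t := fun K => btw r F' K)
    (t' := btw r F' H) (s' := fun F => btw r F H) ?_]
  · have hrs : ∀ F ∈ btw r F' H, ∑ K ∈ btw r F H, aa r F K = if F = H then 1 else 0 := by
      intro F hF
      simp only [btw, mem_filter, mem_univ, true_and] at hF
      exact RS h1 h2 hH hF.2.2
    rw [Finset.sum_congr rfl hrs, Finset.sum_ite_eq' (btw r F' H) H (fun _ => (1 : ℚ))]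
    rw [if_pos]
    simp only [btw, mem_filter, mem_univ, true_and]
    exact ⟨hH, hFH, le_refl _⟩
  · intro K F
    simp only [btw, mem_filter, mem_univ, true_and]
    constructor
    · rintro ⟨⟨hKf, hFK', hKH⟩, ⟨hFf, hF'F, hFK⟩⟩
      exact ⟨⟨hKf, hFK, hKH⟩, ⟨hFf, hF'F, le_trans hFK hKH⟩⟩
    · rintro ⟨⟨hKf, hFK, hKH⟩, ⟨hFf, hF'F, hFH'⟩⟩
      exact ⟨⟨hKf, le_trans hF'F hFK, hKH⟩, ⟨hFf, hF'F, hFK⟩⟩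

lemma AA_self {F' : Finset (Fin n)} (hF' : Flt r F') : AA r F' F' = 1 := by
  have hb : btw r F' F' = {F'} := by
    ext K
    simp only [btw, mem_filter, mem_univ, true_and, Finset.mem_singleton]
    constructor
    · rintro ⟨hKf, h1', h2'⟩; exact le_antisymm h2' h1'
    · rintro rfl; exact ⟨hF', le_refl _, le_refl _⟩
  have := DC h1 h2 hF' hF' (le_refl _)
  rwa [hb, Finset.sum_singleton] at this

lemma CS : ∀ (m : ℕ) {F' H : Finset (Fin n)}, Flt r F' → Flt r H → F' ⊆ H →
    (H \ F').card ≤ m → AA r F' H = if F' = H then 1 else 0 := by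
  intro m
  induction m with
  | zero =>
    intro F' H hF' hH hsub hcard
    have hE : H \ F' = ∅ := Finset.card_eq_zero.mp (Nat.le_antisymm hcard (Nat.zero_le _))
    have hEq : F' = H := le_antisymm hsub (Finset.sdiff_eq_empty_iff_subset.mp hE)
    subst hEq
    rw [if_pos rfl]
    exact AA_self h1 h2 hF'
  | succ m ih =>
    intro F' H hF' hH hsub hcard
    by_cases hEq : F' = H
    · subst hEq; rw [if_pos rfl]; exact AA_self h1 h2 hF'
    · rw [if_neg hEq]
      have hdc := DC h1 h2 hF' hH hsub
      have hHmem : H ∈ btw r F' H := by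
        simp only [btw, mem_filter, mem_univ, true_and]
        exact ⟨hH, hsub, le_refl _⟩
      rw [← Finset.add_sum_erase _ _ hHmem] at hdc
      have herase : ∀ K ∈ (btw r F' H).erase H, AA r F' K = if F' = K then 1 else 0 := by
        intro K hK
        obtain ⟨hne, hKb⟩ := Finset.mem_erase.mp hK
        simp only [btw, mem_filter, mem_univ, true_and] at hKb
        obtain ⟨hKf, hF'K, hKH⟩ := hKb
        apply ih hF' hKf hF'K
        have hss : K \ F' ⊂ H \ F' := by
          refine Finset.ssubset_iff_subset_ne.mpr ⟨Finset.sdiff_subset_sdiff hKH (le_refl _), ?_⟩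
          intro hEq2
          apply hne
          apply le_antisymm hKH
          intro e he
          by_cases heF : e ∈ F'
          · exact hF'K heF
          · have : e ∈ H \ F' := Finset.mem_sdiff.mpr ⟨he, heF⟩
            rw [← hEq2] at this
            exact (Finset.mem_sdiff.mp this).1
        have := Finset.card_lt_card hss
        omega
      rw [Finset.sum_congr rfl herase] at hdc
      rw [Finset.sum_ite_eq (((btw r F' H)).erase H) F' (fun _ => (1:ℚ))] at hdc
      rw [if_pos] at hdc
      · linarith
      · exact Finset.mem_erase.mpr ⟨hEq, by
          simp only [btw, mem_filter, mem_univ, true_and]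
          exact ⟨hF', le_refl _, hsub⟩⟩

lemma core (G : ℕ → ℚ) {F' : Finset (Fin n)} (hF' : Flt r F') :
    ∑ F ∈ ab r F', ∑ B ∈ Fᶜ.powerset, (-1 : ℚ) ^ B.card * G (r (B ∪ F))
      = G (r F') := by
  have hinner : ∀ F ∈ ab r F',
      ∑ B ∈ Fᶜ.powerset, (-1 : ℚ) ^ B.card * G (r (B ∪ F))
        = ∑ H ∈ ab r F, aa r F H * G (r H) := by
    intro F hF
    simp only [ab, mem_filter, mem_univ, true_and] at hF
    have hmaps : ∀ B ∈ Fᶜ.powerset, cl r (B ∪ F) ∈ ab r F := by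
      intro B _
      simp only [ab, mem_filter, mem_univ, true_and]
      exact ⟨flt_cl h1 h2 _, le_trans Finset.subset_union_right (subset_cl _)⟩
    rw [← Finset.sum_fiberwise_of_maps_to hmaps (fun B => (-1 : ℚ) ^ B.card * G (r (B ∪ F)))]
    apply Finset.sum_congr rfl
    intro H hH
    have hfib : ∀ B ∈ Fᶜ.powerset.filter (fun B => cl r (B ∪ F) = H),
        (-1 : ℚ) ^ B.card * G (r (B ∪ F)) = (-1 : ℚ) ^ B.card * G (r H) := by
      intro B hB
      obtain ⟨_, hclB⟩ := Finset.mem_filter.mp hB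
      rw [← hclB, r_cl h1 h2]
    rw [Finset.sum_congr rfl hfib, ← Finset.sum_mul]
    rfl
  rw [Finset.sum_congr rfl hinner]
  rw [Finset.sum_comm'
    (s := ab r F') (t := fun F => ab r F)
    (t' := ab r F') (s' := fun H => btw r F' H) ?_]
  · have hAA : ∀ H ∈ ab r F',
        ∑ F ∈ btw r F' H, aa r F H * G (r H) = (if F' = H then 1 else 0) * G (r H) := by
      intro H hH
      simp only [ab, mem_filter, mem_univ, true_and] at hH
      rw [← Finset.sum_mul]
      congr 1
      exact CS h1 h2 (H \ F').card hF' hH.1 hH.2 (le_refl _)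
    rw [Finset.sum_congr rfl hAA]
    have : ∀ H ∈ ab r F', (if F' = H then 1 else 0) * G (r H)
        = if F' = H then G (r H) else 0 := by
      intro H _; split <;> simp
    rw [Finset.sum_congr rfl this, Finset.sum_ite_eq (ab r F') F' (fun H => G (r H))]
    rw [if_pos]
    simp only [ab, mem_filter, mem_univ, true_and]
    exact ⟨hF', le_refl _⟩
  · intro F H
    simp only [ab, btw, mem_filter, mem_univ, true_and]
    constructor
    · rintro ⟨⟨hFf, hF'F⟩, ⟨hHf, hFH⟩⟩
      exact ⟨⟨hFf, hF'F, hFH⟩, ⟨hHf, le_trans hF'F hFH⟩⟩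
    · rintro ⟨⟨hFf, hF'F, hFH⟩, ⟨hHf, _⟩⟩
      exact ⟨⟨hFf, hF'F⟩, ⟨hHf, hFH⟩⟩

omit h1 h2 in
lemma negpow_sub {m k : ℕ} (h : k ≤ m) : (-1 : ℚ) ^ (m - k) = (-1) ^ m * (-1) ^ k := by
  have h1 : (-1 : ℚ) ^ (m - k) * (-1) ^ k = (-1) ^ m := by
    rw [← pow_add, Nat.sub_add_cancel h]
  have h2 : (-1 : ℚ) ^ k * (-1) ^ k = 1 := by rw [← mul_pow]; norm_num
  calc (-1 : ℚ) ^ (m - k) = (-1 : ℚ) ^ (m - k) * ((-1) ^ k * (-1) ^ k) := by rw [h2, mul_one]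
  _ = ((-1 : ℚ) ^ (m - k) * (-1) ^ k) * (-1) ^ k := by ring
  _ = (-1) ^ m * (-1) ^ k := by rw [h1]

include h1 h2

lemma main (h0 : r ∅ = 0) (d : ℕ) (hd : r Finset.univ = d) (q : ℚ) :
    q ^ d * ∑ S : Finset (Fin n),
        (q⁻¹ - 1) ^ (d - r S) * ((1 : ℚ) - 1) ^ (S.card - r S) =
      ∑ F : Finset (Fin n), if Flt r F then
          (q ^ (d - r F) * ∑ S ∈ Fᶜ.powerset,
              (q⁻¹ - 1) ^ ((d - r F) - (r (S ∪ F) - r F)) *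
              ((0 : ℚ) - 1) ^ (S.card - (r (S ∪ F) - r F))) *
          (∑ S ∈ F.powerset,
              ((0 : ℚ) - 1) ^ (r F - r S) * ((1 : ℚ) - 1) ^ (S.card - r S)) *
          q ^ (r F)
        else 0 := by
  have hone : ((1:ℚ) - 1) = 0 := sub_self 1
  have hzer : ((0:ℚ) - 1) = -1 := by norm_num
  have hrled : ∀ S : Finset (Fin n), r S ≤ d := fun S => hd ▸ r_mono h1 (subset_univ S)
  set u : ℚ := q⁻¹ - 1 with hu
  set fl : Finset (Finset (Fin n)) := univ.filter (fun F => Flt r F) with hfl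
  set IndS : Finset (Finset (Fin n)) := univ.filter (fun S => r S = S.card) with hIndS
  set bb : Finset (Fin n) → ℕ := fun F' => (IndS.filter (fun S => cl r S = F')).card with hbb
  -- Step L : LHS sum over independent sets, then grouped by closure
  have hLa : ∑ S : Finset (Fin n), u ^ (d - r S) * ((1 : ℚ) - 1) ^ (S.card - r S)
      = ∑ S ∈ IndS, u ^ (d - S.card) := by
    rw [hIndS, Finset.sum_filter]
    apply Finset.sum_congr rfl
    intro S _
    by_cases h : r S = S.card
    · rw [if_pos h, h, Nat.sub_self, pow_zero, mul_one]
    · have hlt : r S < S.card := lt_of_le_of_ne (r_le_card h1 h0 S) h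
      rw [if_neg h, hone, zero_pow (by omega : S.card - r S ≠ 0), mul_zero]
  have hLb : ∑ S ∈ IndS, u ^ (d - S.card)
      = ∑ F' ∈ fl, (bb F' : ℚ) * u ^ (d - r F') := by
    have hmapsL : ∀ S ∈ IndS, cl r S ∈ fl := by
      intro S _
      rw [hfl, mem_filter]
      exact ⟨mem_univ _, flt_cl h1 h2 S⟩
    rw [← Finset.sum_fiberwise_of_maps_to hmapsL (fun S => u ^ (d - S.card))]
    apply Finset.sum_congr rfl
    intro F' hF'
    have hc : ∀ S ∈ IndS.filter (fun S => cl r S = F'),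
        u ^ (d - S.card) = u ^ (d - r F') := by
      intro S hS
      obtain ⟨hS1, hS2⟩ := mem_filter.mp hS
      rw [hIndS, mem_filter] at hS1
      rw [← hS2, r_cl h1 h2, hS1.2]
    rw [Finset.sum_congr rfl hc, Finset.sum_const, nsmul_eq_mul]
  -- Step N : the restriction factor, grouped by closure
  have hN : ∀ F ∈ fl,
      (∑ S ∈ F.powerset, ((0:ℚ) - 1) ^ (r F - r S) * ((1:ℚ) - 1) ^ (S.card - r S))
        = ∑ F' ∈ fl.filter (fun F' => F' ⊆ F), (bb F' : ℚ) * (-1:ℚ) ^ (r F - r F') := by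
    intro F hF
    have flF : Flt r F := by rw [hfl, mem_filter] at hF; exact hF.2
    have ha : (∑ S ∈ F.powerset, ((0:ℚ) - 1) ^ (r F - r S) * ((1:ℚ) - 1) ^ (S.card - r S))
        = ∑ S ∈ F.powerset.filter (fun S => r S = S.card), (-1:ℚ) ^ (r F - r S) := by
      rw [Finset.sum_filter]
      apply Finset.sum_congr rfl
      intro S _
      by_cases h : r S = S.card
      · rw [if_pos h, hzer, hone]
        rw [show S.card - r S = 0 by omega, pow_zero, mul_one]
      · have hlt : r S < S.card := lt_of_le_of_ne (r_le_card h1 h0 S) h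
        rw [if_neg h, hone, zero_pow (by omega : S.card - r S ≠ 0), mul_zero]
    rw [ha]
    have hmapsN : ∀ S ∈ F.powerset.filter (fun S => r S = S.card),
        cl r S ∈ fl.filter (fun F' => F' ⊆ F) := by
      intro S hS
      obtain ⟨hS1, _⟩ := mem_filter.mp hS
      rw [mem_filter, hfl, mem_filter]
      exact ⟨⟨mem_univ _, flt_cl h1 h2 S⟩, cl_subset_flat h1 h2 flF (mem_powerset.mp hS1)⟩
    rw [← Finset.sum_fiberwise_of_maps_to hmapsN (fun S => (-1:ℚ) ^ (r F - r S))]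
    apply Finset.sum_congr rfl
    intro F' hF'
    obtain ⟨hF'fl, hF'F⟩ := mem_filter.mp hF'
    have hsets : (F.powerset.filter (fun S => r S = S.card)).filter (fun S => cl r S = F')
        = IndS.filter (fun S => cl r S = F') := by
      ext S
      simp only [mem_filter, mem_powerset, hIndS, mem_univ, true_and]
      constructor
      · rintro ⟨⟨_, hi⟩, hc⟩; exact ⟨hi, hc⟩
      · rintro ⟨hi, hc⟩
        exact ⟨⟨le_trans (subset_cl S) (hc ▸ hF'F), hi⟩, hc⟩
    rw [hsets]
    have hc : ∀ S ∈ IndS.filter (fun S => cl r S = F'),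
        (-1:ℚ) ^ (r F - r S) = (-1:ℚ) ^ (r F - r F') := by
      intro S hS
      obtain ⟨_, hS2⟩ := mem_filter.mp hS
      rw [← hS2, r_cl h1 h2]
    rw [Finset.sum_congr rfl hc, Finset.sum_const, nsmul_eq_mul]
  -- Step R : RHS as a sum over flats
  rw [show (∑ F : Finset (Fin n), if Flt r F then
          (q ^ (d - r F) * ∑ S ∈ Fᶜ.powerset,
              u ^ ((d - r F) - (r (S ∪ F) - r F)) *
              ((0 : ℚ) - 1) ^ (S.card - (r (S ∪ F) - r F))) *
          (∑ S ∈ F.powerset,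
              ((0 : ℚ) - 1) ^ (r F - r S) * ((1 : ℚ) - 1) ^ (S.card - r S)) *
          q ^ (r F)
        else 0)
      = ∑ F ∈ fl,
          (q ^ (d - r F) * ∑ S ∈ Fᶜ.powerset,
              u ^ ((d - r F) - (r (S ∪ F) - r F)) *
              ((0 : ℚ) - 1) ^ (S.card - (r (S ∪ F) - r F))) *
          (∑ S ∈ F.powerset,
              ((0 : ℚ) - 1) ^ (r F - r S) * ((1 : ℚ) - 1) ^ (S.card - r S)) *
          q ^ (r F) from (Finset.sum_filter _ _).symm]
  -- substitute hN and expand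
  have hR1 : ∀ F ∈ fl,
      (q ^ (d - r F) * ∑ S ∈ Fᶜ.powerset,
              u ^ ((d - r F) - (r (S ∪ F) - r F)) *
              ((0 : ℚ) - 1) ^ (S.card - (r (S ∪ F) - r F))) *
          (∑ S ∈ F.powerset,
              ((0 : ℚ) - 1) ^ (r F - r S) * ((1 : ℚ) - 1) ^ (S.card - r S)) *
          q ^ (r F)
      = ∑ F' ∈ fl.filter (fun F' => F' ⊆ F),
          (q ^ (d - r F) * ∑ S ∈ Fᶜ.powerset,
              u ^ ((d - r F) - (r (S ∪ F) - r F)) *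
              ((0 : ℚ) - 1) ^ (S.card - (r (S ∪ F) - r F))) *
          ((bb F' : ℚ) * (-1:ℚ) ^ (r F - r F')) * q ^ (r F) := by
    intro F hF
    rw [hN F hF, Finset.mul_sum, Finset.sum_mul]
  rw [Finset.sum_congr rfl hR1]
  -- swap the two sums
  rw [Finset.sum_comm'
    (s := fl) (t := fun F => fl.filter (fun F' => F' ⊆ F))
    (t' := fl) (s' := fun F' => ab r F')
    (by
      intro F F'
      simp only [hfl, ab, mem_filter, mem_univ, true_and]
      constructor
      · rintro ⟨hFf, hF'f, hF'F⟩; exact ⟨⟨hFf, hF'F⟩, hF'f⟩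
      · rintro ⟨⟨hFf, hF'F⟩, hF'f⟩; exact ⟨hFf, hF'f, hF'F⟩)]
  -- per F' identity
  rw [hLa, hLb, Finset.mul_sum]
  apply Finset.sum_congr rfl
  intro F' hF'
  have flF' : Flt r F' := by rw [hfl, mem_filter] at hF'; exact hF'.2
  have hF'd : r F' ≤ d := hrled F'
  have hcore := core h1 h2 (fun k => (-1:ℚ)^k * u ^ (d - k)) flF'
  have hterm : ∀ F ∈ ab r F',
      (q ^ (d - r F) * ∑ B ∈ Fᶜ.powerset,
              u ^ ((d - r F) - (r (B ∪ F) - r F)) *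
              ((0 : ℚ) - 1) ^ (B.card - (r (B ∪ F) - r F))) *
          ((bb F' : ℚ) * (-1:ℚ) ^ (r F - r F')) * q ^ (r F)
      = (bb F' : ℚ) * ((q ^ d * (-1:ℚ) ^ (r F')) *
          ∑ B ∈ Fᶜ.powerset, (-1:ℚ) ^ B.card *
            ((-1:ℚ) ^ (r (B ∪ F)) * u ^ (d - r (B ∪ F)))) := by
    intro F hF
    rw [ab, mem_filter] at hF
    obtain ⟨_, flF, hF'F⟩ := hF
    have hFd : r F ≤ d := hrled F
    have hrF'F : r F' ≤ r F := r_mono h1 hF'F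
    have hB : ∀ B ∈ Fᶜ.powerset,
        u ^ ((d - r F) - (r (B ∪ F) - r F)) *
              ((0 : ℚ) - 1) ^ (B.card - (r (B ∪ F) - r F))
        = (-1:ℚ) ^ (r F) * ((-1:ℚ) ^ B.card *
            ((-1:ℚ) ^ (r (B ∪ F)) * u ^ (d - r (B ∪ F)))) := by
      intro B _
      have hFX : r F ≤ r (B ∪ F) := r_mono h1 subset_union_right
      have hXd : r (B ∪ F) ≤ d := hrled _
      have hXB : r (B ∪ F) - r F ≤ B.card := by
        have h := r_union_le_add h1 F B
        rw [union_comm] at h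
        omega
      have e1 : (d - r F) - (r (B ∪ F) - r F) = d - r (B ∪ F) := by omega
      have e2 : (-1:ℚ) ^ (B.card - (r (B ∪ F) - r F))
          = (-1:ℚ) ^ B.card * ((-1:ℚ) ^ (r (B ∪ F)) * (-1:ℚ) ^ (r F)) := by
        rw [negpow_sub hXB, negpow_sub hFX]
      rw [hzer, e1, e2]
      ring
    rw [Finset.sum_congr rfl hB, ← Finset.mul_sum]
    have e3 : (-1:ℚ) ^ (r F - r F') = (-1:ℚ) ^ (r F) * (-1:ℚ) ^ (r F') := negpow_sub hrF'F
    have e4 : q ^ (d - r F) * q ^ (r F) = q ^ d := by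
      rw [← pow_add, Nat.sub_add_cancel hFd]
    have hs : (-1:ℚ) ^ (r F) * (-1:ℚ) ^ (r F) = 1 := by rw [← mul_pow]; norm_num
    rw [e3]
    set SS : ℚ := ∑ B ∈ Fᶜ.powerset, (-1:ℚ) ^ B.card *
            ((-1:ℚ) ^ (r (B ∪ F)) * u ^ (d - r (B ∪ F))) with hSS
    calc (q ^ (d - r F) * ((-1:ℚ) ^ (r F) * SS)) *
          ((bb F' : ℚ) * ((-1:ℚ) ^ (r F) * (-1:ℚ) ^ (r F'))) * q ^ (r F)
        = (q ^ (d - r F) * q ^ (r F)) * (((-1:ℚ) ^ (r F) * (-1:ℚ) ^ (r F)) *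
            ((bb F' : ℚ) * ((-1:ℚ) ^ (r F') * SS))) := by ring
      _ = q ^ d * (1 * ((bb F' : ℚ) * ((-1:ℚ) ^ (r F') * SS))) := by rw [e4, hs]
      _ = (bb F' : ℚ) * ((q ^ d * (-1:ℚ) ^ (r F')) * SS) := by ring
  rw [Finset.sum_congr rfl hterm, ← Finset.mul_sum, ← Finset.mul_sum, hcore]
  have hs' : (-1:ℚ) ^ (r F') * (-1:ℚ) ^ (r F') = 1 := by rw [← mul_pow]; norm_num
  calc q ^ d * ((bb F' : ℚ) * u ^ (d - r F'))
      = (bb F' : ℚ) * (q ^ d * (((-1:ℚ) ^ (r F') * (-1:ℚ) ^ (r F')) * u ^ (d - r F'))) := by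
        rw [hs']; ring
    _ = (bb F' : ℚ) * (q ^ d * (-1:ℚ) ^ (r F') * ((-1:ℚ) ^ (r F') * u ^ (d - r F'))) := by
        ring


end Conv

end Stmt13Aux

/- The decomposition-theorem recursion
`h_M(q) = Σ_{F ∈ L(M)} h^{br}_{M/F}(q) · h_{rk F}(M|F) · q^{rk F}`, with
`h_M(q) = q^d T_M(1/q,1)`, `h^{br}_{M/F}(q) = q^{d - rk F} T_{M/F}(1/q,0)`,
and `h_{rk F}(M|F) = T_{M|F}(0,1)`. -/
open Classical in
theorem stmt_13 (n : ℕ) (r : Finset (Fin n) → ℕ)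
    (h0 : r ∅ = 0)
    (h1 : ∀ (S : Finset (Fin n)) (e : Fin n),
      r S ≤ r (insert e S) ∧ r (insert e S) ≤ r S + 1)
    (h2 : ∀ S T : Finset (Fin n), r (S ∪ T) + r (S ∩ T) ≤ r S + r T)
    (d : ℕ) (hd : r Finset.univ = d)
    (IsFlat : Finset (Fin n) → Prop)
    (hFlat : ∀ F, IsFlat F ↔ ∀ e ∉ F, r F < r (insert e F))
    (q : ℚ) (hq : q ≠ 0) :
    q ^ d * ∑ S : Finset (Fin n),
        (q⁻¹ - 1) ^ (d - r S) * ((1 : ℚ) - 1) ^ (S.card - r S) =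
      ∑ F : Finset (Fin n), if IsFlat F then
          (q ^ (d - r F) * ∑ S ∈ Fᶜ.powerset,
              (q⁻¹ - 1) ^ ((d - r F) - (r (S ∪ F) - r F)) *
              ((0 : ℚ) - 1) ^ (S.card - (r (S ∪ F) - r F))) *
          (∑ S ∈ F.powerset,
              ((0 : ℚ) - 1) ^ (r F - r S) * ((1 : ℚ) - 1) ^ (S.card - r S)) *
          q ^ (r F)
        else 0 := by
  have hIF : IsFlat = Stmt13Aux.Flt r := funext fun F => propext ((hFlat F).trans Iff.rfl)
  rw [hIF]
  exact Stmt13Aux.main h1 h2 h0 d hd q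
end
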